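/- arXiv:0712.0332 — 2 statements merged into one kernel-verified Lean document; each statement's English description precedes it below -/
import Mathlib

section
/- Let ξ : [0,∞) → ℝ be continuous and suppose there are constants A > 0 and σ' < 1 with |ξ(t)| ≤ A + σ' t for all t ≥ 0. Let ψ(t,z) solve the strip Loewner equation ∂_t ψ(t,z) = coth((ψ(t,z) − ξ(t))/2), ψ(0,z) = z, and let L(t) be the set of z in the strip S_π for which the solution blows up by time t. Then L(∞) := ∪_{t≥0} L(t) is a bounded subset of S_π: there exist a, a' > 0 (depending on ξ) such that L(∞) ⊂ {x + iy : −a' < x < a, 0 < y < π}. -/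
open Complex
open Filter Set Topology
open scoped ENNReal

/-!
Where `Re (ψ - ξ) ≥ c > 0` we have `Re coth ((ψ - ξ) / 2) ≥ tanh (c / 2)`, and since `σ' < 1`
this exceeds `σ'` once `c` is large. So a trajectory that stays `c` to the right of the driving
function moves right faster than the bound `A + σ' t` on `ξ`; starting from `Re z ≥ A + c`, it
therefore never comes within `c` of `ξ` and is not swallowed. The left side follows from the
symmetry `(ψ, ξ) ↦ (-ψ, -ξ)` of the equation.
-/

namespace Complex

theorem sinh_re (w : ℂ) : (sinh w).re = Real.sinh w.re * Real.cos w.im := by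
  conv_lhs => rw [← re_add_im w, sinh_add, sinh_mul_I, cosh_mul_I]
  simp [sinh_ofReal_re, cosh_ofReal_re, sin_ofReal_re, cos_ofReal_re]

theorem sinh_im (w : ℂ) : (sinh w).im = Real.cosh w.re * Real.sin w.im := by
  conv_lhs => rw [← re_add_im w, sinh_add, sinh_mul_I, cosh_mul_I]
  simp [sinh_ofReal_re, cosh_ofReal_re, sin_ofReal_re, cos_ofReal_re]

theorem cosh_re (w : ℂ) : (cosh w).re = Real.cosh w.re * Real.cos w.im := by
  conv_lhs => rw [← re_add_im w, cosh_add, sinh_mul_I, cosh_mul_I]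
  simp [sinh_ofReal_re, cosh_ofReal_re, sin_ofReal_re, cos_ofReal_re]

theorem cosh_im (w : ℂ) : (cosh w).im = Real.sinh w.re * Real.sin w.im := by
  conv_lhs => rw [← re_add_im w, cosh_add, sinh_mul_I, cosh_mul_I]
  simp [sinh_ofReal_re, cosh_ofReal_re, sin_ofReal_re, cos_ofReal_re]

theorem re_cosh_div_sinh (w : ℂ) :
    (cosh w / sinh w).re =
      Real.sinh w.re * Real.cosh w.re / (Real.sinh w.re ^ 2 + Real.sin w.im ^ 2) := by
  rw [div_re, normSq_apply, cosh_re, cosh_im, sinh_re, sinh_im, ← add_div]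
  congr 1
  · linear_combination (Real.sinh w.re * Real.cosh w.re) * Real.sin_sq_add_cos_sq w.im
  · linear_combination Real.sinh w.re ^ 2 * Real.sin_sq_add_cos_sq w.im +
      Real.sin w.im ^ 2 * Real.cosh_sq w.re

theorem tanh_re_le_re_cosh_div_sinh {w : ℂ} (hw : 0 < w.re) :
    Real.tanh w.re ≤ (cosh w / sinh w).re := by
  have hsinh : 0 < Real.sinh w.re := Real.sinh_pos_iff.2 hw
  have hden : Real.sinh w.re ^ 2 + Real.sin w.im ^ 2 ≤ Real.cosh w.re ^ 2 := by
    nlinarith [Real.sin_sq_le_one w.im, Real.cosh_sq w.re]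
  rw [re_cosh_div_sinh, Real.tanh_eq_sinh_div_cosh]
  calc Real.sinh w.re / Real.cosh w.re
      = Real.sinh w.re * Real.cosh w.re / Real.cosh w.re ^ 2 := by
        field_simp
    _ ≤ _ := div_le_div_of_nonneg_left (by positivity) (by positivity) hden

theorem exists_lt_re_cosh_div_sinh_half {σ : ℝ} (hσ : σ < 1) :
    ∃ c > 0, ∀ w : ℂ, c ≤ w.re → σ < (cosh (w / 2) / sinh (w / 2)).re := by
  set s := max σ 0
  have hs : s ∈ Ioo (-1 : ℝ) 1 := ⟨by linarith [le_max_right σ 0], max_lt hσ one_pos⟩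
  have hartanh : 0 ≤ Real.artanh s := Real.artanh_nonneg (le_max_right σ 0)
  refine ⟨2 * (Real.artanh s + 1), by positivity, fun w hw => ?_⟩
  have hre : (w / 2).re = w.re / 2 := by simp
  calc σ ≤ s := le_max_left σ 0
    _ < Real.tanh (w / 2).re := by
        rw [← Real.artanh_lt_artanh_iff hs ⟨Real.neg_one_lt_tanh _, Real.tanh_lt_one _⟩,
          Real.artanh_tanh]
        linarith
    _ ≤ _ := tanh_re_le_re_cosh_div_sinh (by linarith)

end Complex

/-- `f t - σ t` cannot fall below `A + c`: where it equals `A + c`, `f` is at least `c` above `ξ`,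
so `f` is faster than `σ` there. -/
theorem le_sub_of_hasDerivAt_gt_slope {f f' ξ : ℝ → ℝ} {A σ c T t : ℝ}
    (hf : ∀ s ∈ Ico 0 T, HasDerivAt f (f' s) s)
    (hξ : ∀ s ∈ Ico 0 T, ξ s ≤ A + σ * s)
    (hf' : ∀ s ∈ Ico 0 T, c ≤ f s - ξ s → σ < f' s)
    (h0 : A + c ≤ f 0) (ht : t ∈ Ico 0 T) : c ≤ f t - ξ t := by
  have hsub : Icc 0 t ⊆ Ico 0 T := Icc_subset_Ico_right ht.2
  have hfence : σ * t - f t ≤ -(A + c) := by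
    refine image_le_of_deriv_right_lt_deriv_boundary (f := fun s => σ * s - f s)
      (f' := fun s => σ - f' s) (B := fun _ => -(A + c)) (B' := fun _ => 0) ?_ (fun s hs => ?_)
      (by simp only [mul_zero, zero_sub]; linarith)
      (fun _ => hasDerivAt_const _ _) (fun s hs heq => ?_) ⟨ht.1, le_rfl⟩
    · exact fun s hs => ((continuous_const.mul continuous_id).continuousAt.sub
        (hf s (hsub hs)).continuousAt).continuousWithinAt
    · exact (((hasDerivAt_id s).const_mul σ).sub (hf s (hsub (Ico_subset_Icc_self hs))))
        |>.hasDerivWithinAt |>.congr_deriv (by simp)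
    · have hs' := hsub (Ico_subset_Icc_self hs)
      linarith [hf' s hs' (by linarith [hξ s hs'])]
  linarith [hξ t ht]

section Trajectory

variable {ξ : ℝ → ℝ} {ψ : ℝ → ℂ} {A σ c T : ℝ}

theorem re_lt_of_tendsto_sub_zero (hc : 0 < c)
    (hcoth : ∀ w : ℂ, c ≤ w.re → σ < (cosh (w / 2) / sinh (w / 2)).re)
    (hξ : ∀ t, 0 ≤ t → ξ t ≤ A + σ * t) (hT : 0 < T)
    (hψ : ∀ t ∈ Ico 0 T,
      HasDerivAt ψ (cosh ((ψ t - ξ t) / 2) / sinh ((ψ t - ξ t) / 2)) t)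
    (hblow : Tendsto (fun t => ψ t - ξ t) (𝓝[<] T) (𝓝 0)) :
    (ψ 0).re < A + c := by
  by_contra! h0
  have hfar : ∀ t ∈ Ico 0 T, c ≤ (ψ t).re - ξ t :=
    fun t => le_sub_of_hasDerivAt_gt_slope (f := fun t => (ψ t).re)
      (fun t ht => reCLM.hasFDerivAt.comp_hasDerivAt t (hψ t ht)) (fun t ht => hξ t ht.1)
      (fun t _ ht => hcoth _ (by simpa using ht)) h0
  have hre : Tendsto (fun t => (ψ t).re - ξ t) (𝓝[<] T) (𝓝 0) := by
    simpa [Function.comp_def] using (continuous_re.tendsto 0).comp hblow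
  have hnear : ∀ᶠ t in 𝓝[<] T, c ≤ (ψ t).re - ξ t :=
    eventually_of_mem (Ioo_mem_nhdsLT hT) fun t ht => hfar t (Ioo_subset_Ico_self ht)
  linarith [ge_of_tendsto hre hnear]

theorem neg_lt_re_of_tendsto_sub_zero (hc : 0 < c)
    (hcoth : ∀ w : ℂ, c ≤ w.re → σ < (cosh (w / 2) / sinh (w / 2)).re)
    (hξ : ∀ t, 0 ≤ t → -ξ t ≤ A + σ * t) (hT : 0 < T)
    (hψ : ∀ t ∈ Ico 0 T,
      HasDerivAt ψ (cosh ((ψ t - ξ t) / 2) / sinh ((ψ t - ξ t) / 2)) t)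
    (hblow : Tendsto (fun t => ψ t - ξ t) (𝓝[<] T) (𝓝 0)) :
    -(A + c) < (ψ 0).re := by
  have hneg : (-ψ 0).re < A + c := by
    refine re_lt_of_tendsto_sub_zero (ξ := fun t => -ξ t) (ψ := fun t => -ψ t) hc hcoth hξ hT
      (fun t ht => ?_) ?_
    · have harg : (-ψ t - ((-ξ t : ℝ) : ℂ)) / 2 = -((ψ t - ξ t) / 2) := by push_cast; ring
      rw [harg, cosh_neg, sinh_neg, div_neg]
      exact (hψ t ht).neg
    · simpa [neg_add_eq_sub, ← neg_sub'] using hblow.neg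
  rw [neg_re] at hneg
  linarith

end Trajectory

theorem strip_loewner_hull_bounded_general
    (ξ : ℝ → ℝ) (A σ' : ℝ) (hA : 0 < A) (hσ : σ' < 1)
    (hbound : ∀ t : ℝ, 0 ≤ t → |ξ t| ≤ A + σ' * t)
    (ψ : ℂ → ℝ → ℂ) (Tmax : ℂ → ℝ≥0∞)
    (hpos : ∀ z, 0 < Tmax z)
    (hinit : ∀ z, ψ z 0 = z)
    (hode : ∀ z : ℂ, ∀ t : ℝ, 0 ≤ t → ENNReal.ofReal t < Tmax z →
      HasDerivAt (ψ z)
        (Complex.cosh ((ψ z t - (ξ t : ℂ)) / 2) /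
          Complex.sinh ((ψ z t - (ξ t : ℂ)) / 2)) t)
    (hblow : ∀ z : ℂ, Tmax z < ⊤ →
      Filter.Tendsto (fun t => ψ z t - (ξ t : ℂ))
        (nhdsWithin (Tmax z).toReal (Set.Iio (Tmax z).toReal)) (nhds 0)) :
    ∃ a a' : ℝ, 0 < a ∧ 0 < a' ∧ ∀ z : ℂ, 0 < z.im → z.im < Real.pi →
      Tmax z < ⊤ → -a' < z.re ∧ z.re < a := by
  obtain ⟨c, hc, hcoth⟩ := exists_lt_re_cosh_div_sinh_half hσ
  refine ⟨A + c, A + c, add_pos hA hc, add_pos hA hc, fun z _ _ hz => ?_⟩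
  have hT : 0 < (Tmax z).toReal := ENNReal.toReal_pos (hpos z).ne' hz.ne
  have hψ : ∀ t ∈ Ico 0 (Tmax z).toReal, HasDerivAt (ψ z)
      (cosh ((ψ z t - ξ t) / 2) / sinh ((ψ z t - ξ t) / 2)) t :=
    fun t ht => hode z t ht.1 ((ENNReal.ofReal_lt_iff_lt_toReal ht.1 hz.ne).2 ht.2)
  rw [← hinit z]
  exact ⟨neg_lt_re_of_tendsto_sub_zero hc hcoth
      (fun t ht => (neg_le_abs _).trans (hbound t ht)) hT hψ (hblow z hz),
    re_lt_of_tendsto_sub_zero hc hcoth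
      (fun t ht => (le_abs_self _).trans (hbound t ht)) hT hψ (hblow z hz)⟩

/-- If the driving function satisfies `|ξ(t)| ≤ A + σ' t` with `σ' < 1`, then the set of
points of the strip `S_π` swallowed by the strip Loewner chain in finite time is bounded:
it is contained in `{x + iy : -a' < x < a, 0 < y < π}` for some `a, a' > 0`. -/
theorem strip_loewner_hull_bounded
    (ξ : ℝ → ℝ) (hξ : Continuous ξ) (A σ' : ℝ) (hA : 0 < A) (hσ : σ' < 1)
    (hbound : ∀ t : ℝ, 0 ≤ t → |ξ t| ≤ A + σ' * t)
    (ψ : ℂ → ℝ → ℂ) (Tmax : ℂ → ℝ≥0∞)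
    (hpos : ∀ z, 0 < Tmax z)
    (hinit : ∀ z, ψ z 0 = z)
    (hode : ∀ z : ℂ, ∀ t : ℝ, 0 ≤ t → ENNReal.ofReal t < Tmax z →
      HasDerivAt (ψ z)
        (Complex.cosh ((ψ z t - (ξ t : ℂ)) / 2) /
          Complex.sinh ((ψ z t - (ξ t : ℂ)) / 2)) t)
    (hblow : ∀ z : ℂ, Tmax z < ⊤ →
      Filter.Tendsto (fun t => ψ z t - (ξ t : ℂ))
        (nhdsWithin (Tmax z).toReal (Set.Iio (Tmax z).toReal)) (nhds 0)) :
    ∃ a a' : ℝ, 0 < a ∧ 0 < a' ∧ ∀ z : ℂ, 0 < z.im → z.im < Real.pi →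
      Tmax z < ⊤ → -a' < z.re ∧ z.re < a :=
  strip_loewner_hull_bounded_general ξ A σ' hA hσ hbound ψ Tmax hpos hinit hode hblow
end

section
/- Suppose W maps the strip S_π conformally onto S_π \ γ, where γ is a compact simple curve in S_π ∪ ℝ meeting ℝ only at its starting point, and W extends continuously to ℝ with W((−∞, c]) = (−∞, 0], W([d, ∞)) = [0, ∞) for some c < 0 < d, and W((c,d)) = γ ∩ S_π. Then for every z ∈ closure(S_π), Im W(z) ≥ Im z, with strict inequality when z ∈ S_π or z ∈ (c, d). -/
open Complex Set Filter

/-!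
`F z = W z - z` is holomorphic and bounded on the strip, and `Im F ≥ 0` on both boundary
lines: `W` maps the upper line `ℝ_π` into itself and the real axis into
`(-∞, 0] ∪ γ ∪ [0, ∞)`, which lies in the closed upper half-plane. Phragmén–Lindelöf
applied to `exp (i F)`, whose modulus is `exp (-Im F)`, gives `Im F ≥ 0` on the closed strip. If
`Im F` vanished at an interior point, `‖exp (i F)‖` would attain its maximum `1` there and
`F` would be constant, contradicting `Im F (0) = Im W (0) > 0`, as `W 0` lies on the slit.
-/

theorem norm_exp_I_mul (w : ℂ) : ‖exp (I * w)‖ = Real.exp (-w.im) := by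
  simp [norm_exp]

theorem DiffContOnCl.cexp {F : ℂ → ℂ} {U : Set ℂ} (hF : DiffContOnCl ℂ F U) :
    DiffContOnCl ℂ (fun w ↦ exp (F w)) U :=
  ⟨hF.differentiableOn.cexp, hF.continuousOn.cexp⟩

theorem DiffContOnCl.im_nonneg_of_horizontal_strip {F : ℂ → ℂ} {a b : ℝ}
    (hF : DiffContOnCl ℂ F (im ⁻¹' Ioo a b))
    (hbdd : ∃ M, ∀ z ∈ im ⁻¹' Ioo a b, M ≤ (F z).im)
    (ha : ∀ z : ℂ, z.im = a → 0 ≤ (F z).im) (hb : ∀ z : ℂ, z.im = b → 0 ≤ (F z).im)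
    {z : ℂ} (hza : a ≤ z.im) (hzb : z.im ≤ b) : 0 ≤ (F z).im := by
  rcases hza.eq_or_lt with hza | hza
  · exact ha z hza.symm
  obtain ⟨M, hM⟩ := hbdd
  have hexp : DiffContOnCl ℂ (fun w ↦ exp (I * F w)) (im ⁻¹' Ioo a b) :=
    (hF.const_smul I).cexp
  have hgrowth : (fun w ↦ exp (I * F w)) =O[comap (_root_.abs ∘ re) atTop ⊓
      𝓟 (im ⁻¹' Ioo a b)] fun w ↦ Real.exp (-M * Real.exp (0 * |w.re|)) := by
    refine Asymptotics.IsBigO.of_bound 1 (eventually_inf_principal.2 (Eventually.of_forall ?_))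
    intro w hw
    simpa [norm_exp_I_mul, abs_of_pos (Real.exp_pos _)] using hM w hw
  have := PhragmenLindelof.horizontal_strip (C := 1) hexp
    ⟨0, div_pos Real.pi_pos (sub_pos.2 (hza.trans_le hzb)), -M, hgrowth⟩
    (fun w hw ↦ by simpa [norm_exp_I_mul] using ha w hw)
    (fun w hw ↦ by simpa [norm_exp_I_mul] using hb w hw) hza.le hzb
  simpa [norm_exp_I_mul] using this

theorem DiffContOnCl.im_pos_of_im_nonneg {F : ℂ → ℂ} {U : Set ℂ} (hF : DiffContOnCl ℂ F U)
    (hU : IsPreconnected U) (hUo : IsOpen U) (hnonneg : ∀ z ∈ closure U, 0 ≤ (F z).im)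
    {z₀ : ℂ} (hz₀ : z₀ ∈ closure U) (hpos : 0 < (F z₀).im) {z : ℂ} (hz : z ∈ U) :
    0 < (F z).im := by
  refine (hnonneg z (subset_closure hz)).lt_of_ne fun hzero ↦ hpos.ne' ?_
  have hmax : IsMaxOn (norm ∘ fun w ↦ exp (I * F w)) U z := fun w hw ↦ by
    simpa [norm_exp_I_mul, ← hzero] using hnonneg w (subset_closure hw)
  have hconst := Complex.eqOn_closure_of_isPreconnected_of_isMaxOn_norm hU hUo
    (hF.const_smul I).cexp hz hmax hz₀
  have := congrArg norm hconst
  simpa [norm_exp_I_mul, ← hzero] using this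

theorem slit_strip_map_raises_imaginary_part_general
    (W : ℂ → ℂ) (γ : Set ℂ) (c d : ℝ) (hc : c < 0) (hd : 0 < d)
    (S : Set ℂ) (hS : S = {z : ℂ | 0 < z.im ∧ z.im < Real.pi})
    (hWdiff : DifferentiableOn ℂ W S)
    (hWcont : ContinuousOn W (closure S))
    (hWleft : W '' {z : ℂ | z.im = 0 ∧ z.re ≤ c} = {z : ℂ | z.im = 0 ∧ z.re ≤ 0})
    (hWright : W '' {z : ℂ | z.im = 0 ∧ d ≤ z.re} = {z : ℂ | z.im = 0 ∧ 0 ≤ z.re})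
    (hWslit : W '' {z : ℂ | z.im = 0 ∧ c < z.re ∧ z.re < d} = γ ∩ S)
    (hWtop : ∀ x : ℝ, (W ((x : ℂ) + Real.pi * Complex.I)).im = Real.pi)
    (hWbdd : ∃ M : ℝ, ∀ z ∈ closure S, ‖W z - z‖ ≤ M) :
    ∀ z ∈ closure S,
      z.im ≤ (W z).im
      ∧ ((z ∈ S ∨ (z.im = 0 ∧ c < z.re ∧ z.re < d)) → z.im < (W z).im) := by
  obtain rfl : S = im ⁻¹' Ioo 0 Real.pi := hS
  obtain ⟨M, hM⟩ := hWbdd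
  have hclosure : closure (im ⁻¹' Ioo 0 Real.pi) = im ⁻¹' Icc 0 Real.pi := by
    rw [closure_preimage_im, closure_Ioo Real.pi_pos.ne]
  have hF : DiffContOnCl ℂ (fun z ↦ W z - z) (im ⁻¹' Ioo 0 Real.pi) :=
    ⟨hWdiff.sub differentiableOn_id, hWcont.sub continuousOn_id⟩
  have hslit : ∀ z : ℂ, z.im = 0 → c < z.re → z.re < d → 0 < (W z).im :=
    fun z h0 hc hd ↦ (hWslit.subset ⟨z, ⟨h0, hc, hd⟩, rfl⟩).2.1
  have hreal : ∀ z : ℂ, z.im = 0 → 0 ≤ (W z).im := by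
    intro z h0
    rcases le_or_gt z.re c with hc | hc
    · exact (hWleft.subset ⟨z, ⟨h0, hc⟩, rfl⟩).1.ge
    rcases le_or_gt d z.re with hd | hd
    · exact (hWright.subset ⟨z, ⟨h0, hd⟩, rfl⟩).1.ge
    · exact (hslit z h0 hc hd).le
  have hnonneg : ∀ z ∈ closure (im ⁻¹' Ioo 0 Real.pi), 0 ≤ (W z - z).im := by
    rw [hclosure]
    refine fun z hz ↦ hF.im_nonneg_of_horizontal_strip ⟨-M, fun w hw ↦ ?_⟩
      (fun w hw ↦ by simpa [hw] using hreal w hw) (fun w hw ↦ ?_) hz.1 hz.2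
    · exact neg_le_of_abs_le ((abs_im_le_norm _).trans (hM w (subset_closure hw)))
    · rw [← re_add_im w, hw, sub_im, hWtop]
      simp
  refine fun z hz ↦ ⟨sub_nonneg.1 (by simpa using hnonneg z hz), ?_⟩
  rintro (hzS | ⟨h0, hc, hd⟩)
  · have hpos : 0 < (W 0 - 0).im := by simpa using hslit 0 rfl (by simpa) (by simpa)
    have hconn : IsPreconnected (im ⁻¹' Ioo 0 Real.pi) :=
      ((convex_Ioo 0 Real.pi).linear_preimage imLm).isPreconnected
    simpa using hF.im_pos_of_im_nonneg hconn (isOpen_Ioo.preimage continuous_im) hnonneg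
      (hclosure ▸ ⟨le_rfl, Real.pi_pos.le⟩) hpos hzS
  · simpa [h0] using hslit z h0 hc hd

/-- If `W` maps the strip `S_π` conformally onto `S_π \ γ` for a compact simple curve `γ`
in `S_π ∪ ℝ` meeting `ℝ` only at its starting point, extends continuously to the closed
strip with `W((-∞,c]) = (-∞,0]`, `W([d,∞)) = [0,∞)`, `W((c,d)) = γ ∩ S_π`, maps the upper
boundary `ℝ_π` into itself and satisfies `W(z) - z` bounded, then `Im W(z) ≥ Im z` on the
closed strip, with strict inequality for `z ∈ S_π` or `z ∈ (c,d)`. -/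
theorem slit_strip_map_raises_imaginary_part
    (W : ℂ → ℂ) (γ : Set ℂ) (c d : ℝ) (hc : c < 0) (hd : 0 < d)
    (S : Set ℂ) (hS : S = {z : ℂ | 0 < z.im ∧ z.im < Real.pi})
    (hγcpt : IsCompact γ) (hγ : γ ⊆ {z : ℂ | 0 ≤ z.im ∧ z.im < Real.pi})
    (hWdiff : DifferentiableOn ℂ W S)
    (hWbij : Set.BijOn W S (S \ γ))
    (hWcont : ContinuousOn W (closure S))
    (hWleft : W '' {z : ℂ | z.im = 0 ∧ z.re ≤ c} = {z : ℂ | z.im = 0 ∧ z.re ≤ 0})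
    (hWright : W '' {z : ℂ | z.im = 0 ∧ d ≤ z.re} = {z : ℂ | z.im = 0 ∧ 0 ≤ z.re})
    (hWslit : W '' {z : ℂ | z.im = 0 ∧ c < z.re ∧ z.re < d} = γ ∩ S)
    (hWtop : ∀ x : ℝ, (W ((x : ℂ) + Real.pi * Complex.I)).im = Real.pi)
    (hWbdd : ∃ M : ℝ, ∀ z ∈ closure S, ‖W z - z‖ ≤ M) :
    ∀ z ∈ closure S,
      z.im ≤ (W z).im
      ∧ ((z ∈ S ∨ (z.im = 0 ∧ c < z.re ∧ z.re < d)) → z.im < (W z).im) :=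
  slit_strip_map_raises_imaginary_part_general W γ c d hc hd S hS hWdiff hWcont hWleft hWright
    hWslit hWtop hWbdd
end
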